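/- arXiv:1410.5101 — 4 statements merged into one kernel-verified Lean document; each statement's English description precedes it below -/
import Mathlib

section
/- Let μ > 0, a₀ ∈ ℝ, and set a(t) = a₀ − μ t and α(t) = a(t)/μ^{2/3}. Let u : ℝ → ℝ be a not-identically-zero, twice continuously differentiable solution of the Airy equation u''(s) = s·u(s), and suppose α* < α(0) is such that u(α*) = 0 and u(s) > 0 for all s ∈ (α*, α(0)]. Let t* := (a₀ − μ^{2/3} α*)/μ. Then x(t) := −μ^{1/3} u'(α(t))/u(α(t)) solves x'(t) = a(t) − x(t)² on [0, t*) and x(t) → −∞ as t → (t*)⁻; moreover a(t*) = μ^{2/3} α*. (This is the delayed tipping point a_d = μ^{2/3} α*: when u = Ai and α* is the first zero of Ai, tipping occurs at a = μ^{2/3}·(−2.33810...).) -/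
/-!
Substituting `x = -c u'(α)/u(α)` with `c = μ^(1/3)` and `α' = -c` turns the Airy equation
`u'' = s u` into the Riccati equation `x' = c² α - x² = a - x²`, valid as long as `u(α(t)) ≠ 0`,
i.e. until `α(t)` decreases to the zero `α*`, which happens at `t*`. The zero is simple: a solution
of the Airy equation with `u(α*) = u'(α*) = 0` vanishes on `[α*, α(0)]` by Grönwall's inequality,
and `u(α(0)) > 0`. At a simple zero approached from the side where `u > 0`, the logarithmic
derivative `u'/u` tends to `+∞`, so `x → -∞`.
-/

open Real Filter Topology Set

theorem eqOn_zero_of_deriv_deriv_eq_mul {u q : ℝ → ℝ} {a b : ℝ}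
    (hq : ContinuousOn q (Icc a b)) (hu : Differentiable ℝ u) (hu' : Differentiable ℝ (deriv u))
    (hode : ∀ s, deriv (deriv u) s = q s * u s) (ha : u a = 0) (ha' : deriv u a = 0) :
    EqOn u 0 (Icc a b) := by
  obtain ⟨M, hM⟩ := isCompact_Icc.exists_bound_of_continuousOn hq
  have hphase : ∀ s ∈ Icc a b, (u s, deriv u s) = 0 := by
    refine eq_zero_of_abs_deriv_le_mul_abs_self_of_eq_zero_right (K := 1 + M)
      (f' := fun s => (deriv u s, q s * u s))
      (hu.continuous.prodMk hu'.continuous).continuousOn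
      (fun s _ => ((hu s).hasDerivAt.prodMk (hode s ▸ (hu' s).hasDerivAt)).hasDerivWithinAt)
      (by simp [ha, ha']) fun s hs => ?_
    have hqs : |q s| ≤ M := hM s (Ico_subset_Icc_self hs)
    simp only [Prod.norm_def, Real.norm_eq_abs, abs_mul]
    have hu_le := le_max_left |u s| |deriv u s|
    have hu'_le := le_max_right |u s| |deriv u s|
    refine max_le ?_ ?_ <;> nlinarith [abs_nonneg (q s), abs_nonneg (u s)]
  exact fun s hs => congrArg Prod.fst (hphase s hs)

theorem deriv_nonneg_of_eq_zero_of_pos_right {u : ℝ → ℝ} {a : ℝ} (hu : DifferentiableAt ℝ u a)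
    (ha : u a = 0) (hpos : ∀ᶠ s in 𝓝[>] a, 0 < u s) : 0 ≤ deriv u a := by
  refine ge_of_tendsto (hasDerivAt_iff_tendsto_slope_left_right.mp hu.hasDerivAt).2 ?_
  filter_upwards [hpos, self_mem_nhdsWithin] with s hs (has : a < s)
  rw [slope_def_field, ha, sub_zero]
  exact (div_pos hs (sub_pos.2 has)).le

theorem tendsto_deriv_div_nhdsGT_atTop {u : ℝ → ℝ} {a : ℝ} (hu : ContinuousAt u a)
    (hu' : ContinuousAt (deriv u) a) (ha : u a = 0) (ha' : 0 < deriv u a)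
    (hpos : ∀ᶠ s in 𝓝[>] a, 0 < u s) :
    Tendsto (fun s => deriv u s / u s) (𝓝[>] a) atTop := by
  have hu0 : Tendsto u (𝓝[>] a) (𝓝[>] 0) :=
    tendsto_nhdsWithin_of_tendsto_nhds_of_eventually_within _
      (ha ▸ hu.tendsto.mono_left nhdsWithin_le_nhds) hpos
  simpa only [div_eq_mul_inv, Function.comp_def] using
    (hu'.tendsto.mono_left nhdsWithin_le_nhds).pos_mul_atTop ha'
      (tendsto_inv_nhdsGT_zero.comp hu0)

theorem cube_rpow_natCast_div_three {c : ℝ} (hc : 0 ≤ c) (n : ℕ) :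
    (c ^ 3) ^ ((n : ℝ) / 3) = c ^ n := by
  rw [← rpow_natCast c 3, ← rpow_mul hc, Nat.cast_ofNat, mul_div_cancel₀ _ three_ne_zero,
    rpow_natCast]

section Airy

variable {u : ℝ → ℝ} (hu : ContDiff ℝ 2 u) (hairy : ∀ s, deriv (deriv u) s = s * u s)
include hu hairy

theorem deriv_pos_of_airy_zero {αs β : ℝ} (hlt : αs < β) (hzero : u αs = 0)
    (hpos : ∀ s ∈ Ioc αs β, 0 < u s) : 0 < deriv u αs := by
  refine (deriv_nonneg_of_eq_zero_of_pos_right (hu.differentiable two_ne_zero αs) hzero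
    (mem_of_superset (Ioc_mem_nhdsGT hlt) hpos)).lt_of_ne' fun h => ?_
  have hβ := eqOn_zero_of_deriv_deriv_eq_mul continuousOn_id (hu.differentiable two_ne_zero)
    hu.differentiable_deriv_two hairy hzero h ⟨hlt.le, le_rfl⟩
  exact (hpos β ⟨hlt, le_rfl⟩).ne' hβ

theorem hasDerivAt_riccati_of_airy {α : ℝ → ℝ} {c t : ℝ} (hα : HasDerivAt α (-c) t)
    (ht : u (α t) ≠ 0) :
    HasDerivAt (fun τ => -c * deriv u (α τ) / u (α τ))
      (c ^ 2 * α t - (-c * deriv u (α t) / u (α t)) ^ 2) t := by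
  have hu'' : HasDerivAt (deriv u) (α t * u (α t)) (α t) :=
    hairy (α t) ▸ (hu.differentiable_deriv_two (α t)).hasDerivAt
  have hu' : HasDerivAt u (deriv u (α t)) (α t) :=
    (hu.differentiable two_ne_zero (α t)).hasDerivAt
  refine (((hu''.comp t hα).const_mul (-c)).div (hu'.comp t hα) ht).congr_deriv ?_
  simp only [Function.comp_apply]
  field_simp

end Airy

theorem delayed_tipping_at_airy_zero_general
    (μ a₀ : ℝ) (hμ : 0 < μ)
    (u : ℝ → ℝ) (hu : ContDiff ℝ 2 u)
    (hairy : ∀ s, deriv (deriv u) s = s * u s)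
    (a α : ℝ → ℝ)
    (ha : a = fun t => a₀ - μ * t)
    (hα : α = fun t => a t / μ ^ ((2 : ℝ) / 3))
    (αs : ℝ) (hlt : αs < α 0) (hzero : u αs = 0)
    (hpos : ∀ s ∈ Set.Ioc αs (α 0), 0 < u s)
    (ts : ℝ) (hts : ts = (a₀ - μ ^ ((2 : ℝ) / 3) * αs) / μ)
    (x : ℝ → ℝ)
    (hx : x = fun t => -μ ^ ((1 : ℝ) / 3) * deriv u (α t) / u (α t)) :
    (∀ t ∈ Set.Ico (0 : ℝ) ts, HasDerivAt x (a t - (x t) ^ 2) t) ∧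
    Tendsto x (𝓝[<] ts) atBot ∧
    a ts = μ ^ ((2 : ℝ) / 3) * αs := by
  obtain ⟨c, hc, rfl⟩ : ∃ c, 0 < c ∧ μ = c ^ 3 :=
    ⟨μ ^ ((1 : ℝ) / 3), by positivity, by rw [← rpow_natCast, ← rpow_mul hμ.le]; norm_num⟩
  have hc2 : (c ^ 3) ^ ((2 : ℝ) / 3) = c ^ 2 := mod_cast cube_rpow_natCast_div_three hc.le 2
  have hc1 : (c ^ 3) ^ ((1 : ℝ) / 3) = c := by simpa using cube_rpow_natCast_div_three hc.le 1
  rw [hc2] at hα hts ⊢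
  rw [hc1] at hx
  subst hx
  have hαt : α = fun t => α 0 - c * t := by subst hα ha; funext t; field_simp; ring
  have haα (t : ℝ) : a t = c ^ 2 * α t := by subst hα; field_simp
  have hαts : α ts = αs := by subst hα ha hts; field_simp; ring
  have hanti : StrictAnti α := fun s t hst => by rw [hαt]; dsimp only; nlinarith
  refine ⟨fun t ht => ?_, ?_, by rw [haα, hαts]⟩
  · have hαd : HasDerivAt α (-c) t := by
      rw [hαt]; simpa using ((hasDerivAt_id t).const_mul c).const_sub (α 0)
    rw [haα]
    exact hasDerivAt_riccati_of_airy hu hairy hαd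
      (hpos _ ⟨hαts ▸ hanti ht.2, hanti.antitone ht.1⟩).ne'
  · have hαlim : Tendsto α (𝓝[<] ts) (𝓝[>] αs) := hαts ▸
      (hαt ▸ by fun_prop : Continuous α).continuousWithinAt.tendsto_nhdsWithin fun _ ht => hanti ht
    have hlog := tendsto_deriv_div_nhdsGT_atTop hu.continuous.continuousAt
      (hu.continuous_deriv one_le_two).continuousAt hzero
      (deriv_pos_of_airy_zero hu hairy hlt hzero hpos)
      (mem_of_superset (Ioc_mem_nhdsGT hlt) hpos)
    simpa only [mul_div_assoc, Function.comp_def] using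
      (hlog.comp hαlim).const_mul_atTop_of_neg (neg_lt_zero.2 hc)

/-- With `a t = a₀ - μ t`, `α t = a t / μ^(2/3)`, `u` a nontrivial `C²` solution
of the Airy equation with `u αs = 0`, `u > 0` on `(αs, α 0]` and `αs < α 0`, the function
`x t = -μ^(1/3) u'(α t)/u(α t)` solves `x' = a t - x²` on `[0, t⋆)` with
`t⋆ = (a₀ - μ^(2/3) αs)/μ`, blows up to `-∞` as `t → t⋆⁻`, and `a t⋆ = μ^(2/3) αs`
(the delayed tipping point `a_d = μ^(2/3) αs`). -/
theorem delayed_tipping_at_airy_zero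
    (μ a₀ : ℝ) (hμ : 0 < μ)
    (u : ℝ → ℝ) (hu : ContDiff ℝ 2 u) (hune : ∃ s, u s ≠ 0)
    (hairy : ∀ s, deriv (deriv u) s = s * u s)
    (a α : ℝ → ℝ)
    (ha : a = fun t => a₀ - μ * t)
    (hα : α = fun t => a t / μ ^ ((2 : ℝ) / 3))
    (αs : ℝ) (hlt : αs < α 0) (hzero : u αs = 0)
    (hpos : ∀ s ∈ Set.Ioc αs (α 0), 0 < u s)
    (ts : ℝ) (hts : ts = (a₀ - μ ^ ((2 : ℝ) / 3) * αs) / μ)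
    (x : ℝ → ℝ)
    (hx : x = fun t => -μ ^ ((1 : ℝ) / 3) * deriv u (α t) / u (α t)) :
    (∀ t ∈ Set.Ico (0 : ℝ) ts, HasDerivAt x (a t - (x t) ^ 2) t) ∧
    Tendsto x (𝓝[<] ts) atBot ∧
    a ts = μ ^ ((2 : ℝ) / 3) * αs :=
  delayed_tipping_at_airy_zero_general μ a₀ hμ u hu hairy a α ha hα αs hlt hzero hpos ts hts x hx
end

section
/- Let μ > 0, a₀ > 0, a(t) = a₀ − μ t, and let x solve x'(t) = a(t) − x(t)² with x(0) = √a₀. Then x exists on all of [0, a₀/μ], is nonincreasing there, and satisfies √(a(t)) ≤ x(t) ≤ √a₀ for 0 ≤ t ≤ a₀/μ, with strict inequality x(t) > √(a(t)) for 0 < t < a₀/μ. In particular x(a₀/μ) ≥ 0: the trajectory remains nonnegative at least until the slowly varying parameter a reaches the static saddle-node bifurcation value a = 0, so tipping is delayed to a ≤ 0. -/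
open Real Filter Topology Set
open scoped NNReal

/-!
Clamping `y` to `[0, √a₀]` in the nonlinearity `y²` makes the field globally Lipschitz, so
Picard–Lindelöf gives a solution on all of `[0, a₀/μ]`. The quasi-static branch `√(a t)` is a
strict lower barrier: where the solution touches it, `x' = a - x² = 0` while
`(√a)' = -μ / (2√a) < 0`. Above the barrier the field is nonpositive, so `x` decreases from `√a₀`;
hence it stays in `[0, √a₀]`, where the clamp is inactive and `x` solves the unclamped equation.
-/

theorem exists_eq_forall_mem_Ioo_hasDerivAt_of_lipschitzWith
    {E : Type*} [NormedAddCommGroup E] [NormedSpace ℝ E] [CompleteSpace E]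
    {f : ℝ → E → E} {tmin tmax : ℝ} (t₀ : Icc tmin tmax) {K : ℝ≥0} {L : ℝ}
    (hlip : ∀ t ∈ Icc tmin tmax, LipschitzWith K (f t))
    (hcont : ∀ y, ContinuousOn (f · y) (Icc tmin tmax))
    (hbdd : ∀ t ∈ Icc tmin tmax, ∀ y, ‖f t y‖ ≤ L) (x₀ : E) :
    ∃ x : ℝ → E, x t₀ = x₀ ∧ ∀ t ∈ Ioo tmin tmax, HasDerivAt x (f t (x t)) t := by
  have hL : 0 ≤ L := (norm_nonneg _).trans (hbdd t₀ t₀.2 x₀)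
  have hlen : 0 ≤ tmax - tmin := by linarith [t₀.2.1, t₀.2.2]
  have hpl : IsPicardLindelof f t₀ x₀ ⟨L * (tmax - tmin), by positivity⟩ 0 ⟨L, hL⟩ K :=
    { lipschitzOnWith := fun t ht => (hlip t ht).lipschitzOnWith
      continuousOn := fun y _ => hcont y
      norm_le := fun t ht y _ => hbdd t ht y
      mul_max_le := by
        show L * max (tmax - t₀) (t₀ - tmin) ≤ L * (tmax - tmin) - 0
        rw [sub_zero]
        exact mul_le_mul_of_nonneg_left
          (max_le (by linarith [t₀.2.1]) (by linarith [t₀.2.2])) hL }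
  obtain ⟨x, hx₀, hx⟩ := hpl.exists_eq_forall_mem_Icc_hasDerivWithinAt₀
  exact ⟨x, hx₀, fun t ht => (hx t (Ioo_subset_Icc_self ht)).hasDerivAt (Icc_mem_nhds ht.1 ht.2)⟩

noncomputable def clampedRiccati (a : ℝ → ℝ) {s : ℝ} (hs : 0 ≤ s) (t y : ℝ) : ℝ :=
  a t - (projIcc 0 s hs y : ℝ) ^ 2

section clampedRiccati

variable {a : ℝ → ℝ} {s : ℝ} (hs : 0 ≤ s)

theorem clampedRiccati_of_mem {t y : ℝ} (hy : y ∈ Icc 0 s) :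
    clampedRiccati a hs t y = a t - y ^ 2 := by
  rw [clampedRiccati, projIcc_of_mem hs hy]

theorem lipschitzWith_clampedRiccati (t : ℝ) :
    LipschitzWith (2 * s).toNNReal (clampedRiccati a hs t) := by
  refine LipschitzWith.of_dist_le_mul fun y z => ?_
  have hu := (projIcc 0 s hs y).2
  have hv := (projIcc 0 s hs z).2
  have hsum : |(projIcc 0 s hs y : ℝ) + projIcc 0 s hs z| ≤ 2 * s := by
    rw [abs_le]; constructor <;> linarith [hu.1, hu.2, hv.1, hv.2]
  calc dist (clampedRiccati a hs t y) (clampedRiccati a hs t z)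
      = |(projIcc 0 s hs y : ℝ) + projIcc 0 s hs z| *
          |(projIcc 0 s hs y : ℝ) - projIcc 0 s hs z| := by
        rw [Real.dist_eq, clampedRiccati, clampedRiccati, ← abs_mul, ← abs_neg]
        ring_nf
    _ ≤ (2 * s) * |y - z| :=
        mul_le_mul hsum (abs_projIcc_sub_projIcc hs) (abs_nonneg _) (by positivity)
    _ = (2 * s).toNNReal * dist y z := by
        rw [Real.coe_toNNReal _ (by positivity), Real.dist_eq]

theorem exists_hasDerivAt_clampedRiccati (ha : Continuous a) (x₀ : ℝ) {T : ℝ} (hT : 0 ≤ T) :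
    ∃ x : ℝ → ℝ, x 0 = x₀ ∧ ∀ t ∈ Icc 0 T, HasDerivAt x (clampedRiccati a hs t (x t)) t := by
  obtain ⟨A, hA⟩ :=
    isCompact_Icc.exists_bound_of_continuousOn (ha.continuousOn (s := Icc (-1) (T + 1)))
  have hbdd : ∀ t ∈ Icc (-1) (T + 1), ∀ y, ‖clampedRiccati a hs t y‖ ≤ A + s ^ 2 := by
    intro t ht y
    have hy := (projIcc 0 s hs y).2
    calc ‖clampedRiccati a hs t y‖ ≤ ‖a t‖ + ‖(projIcc 0 s hs y : ℝ) ^ 2‖ := norm_sub_le _ _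
      _ ≤ A + s ^ 2 := by
        rw [Real.norm_eq_abs (_ ^ 2), abs_of_nonneg (sq_nonneg _)]
        exact add_le_add (hA t ht) (pow_le_pow_left₀ hy.1 hy.2 2)
  obtain ⟨x, hx₀, hx⟩ := exists_eq_forall_mem_Ioo_hasDerivAt_of_lipschitzWith
    (⟨0, by constructor <;> linarith⟩ : Icc (-1 : ℝ) (T + 1))
    (fun t _ => lipschitzWith_clampedRiccati hs t)
    (fun _ => (ha.sub continuous_const).continuousOn) hbdd x₀
  exact ⟨x, hx₀, fun t ht => hx t ⟨by linarith [ht.1], by linarith [ht.2]⟩⟩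

theorem clampedRiccati_sqrt {t : ℝ} (hat : 0 ≤ a t) (hts : √(a t) ≤ s) :
    clampedRiccati a hs t √(a t) = 0 := by
  rw [clampedRiccati_of_mem hs ⟨Real.sqrt_nonneg _, hts⟩, Real.sq_sqrt hat, sub_self]

theorem clampedRiccati_nonpos {t y : ℝ} (hat : 0 ≤ a t) (hts : √(a t) ≤ s) (hy : √(a t) ≤ y) :
    clampedRiccati a hs t y ≤ 0 := by
  have hclamp : √(a t) ≤ projIcc 0 s hs y := by
    have := monotone_projIcc hs hy
    rwa [projIcc_of_mem hs ⟨Real.sqrt_nonneg _, hts⟩] at this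
  rw [clampedRiccati, sub_nonpos, ← Real.sq_sqrt hat]
  exact pow_le_pow_left₀ (Real.sqrt_nonneg _) hclamp 2

theorem div_two_mul_sqrt_lt_clampedRiccati_sqrt {a' t : ℝ} (hat : 0 < a t) (hts : √(a t) ≤ s)
    (ha' : a' < 0) : a' / (2 * √(a t)) < clampedRiccati a hs t √(a t) := by
  rw [clampedRiccati_sqrt hs hat.le hts]
  exact div_neg_of_neg_of_pos ha' (by positivity)

end clampedRiccati

theorem lt_of_eventually_le_of_hasDerivAt {f g : ℝ → ℝ} {f' g' t : ℝ}
    (hle : ∀ᶠ u in 𝓝 t, f u ≤ g u) (hf : HasDerivAt f f' t) (hg : HasDerivAt g g' t)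
    (hlt : f t = g t → f' < g') : f t < g t := by
  refine hle.self_of_nhds.lt_of_ne fun heq => ?_
  have hmin : IsLocalMin (fun u => g u - f u) t := by
    filter_upwards [hle] with u hu
    linarith
  linarith [hmin.hasDerivAt_eq_zero (hg.sub hf), hlt heq]

section barrier

variable {a a' x : ℝ → ℝ} {s T : ℝ} (hs : 0 ≤ s)

theorem sqrt_le_of_hasDerivAt_clampedRiccati (hda : ∀ t, HasDerivAt a (a' t) t)
    (hda_neg : ∀ t, a' t < 0) (ha_pos : ∀ t ∈ Ico 0 T, 0 < a t)
    (ha_le : ∀ t ∈ Icc 0 T, √(a t) ≤ s) (hx₀ : √(a 0) ≤ x 0)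
    (hx : ∀ t ∈ Icc 0 T, HasDerivAt x (clampedRiccati a hs t (x t)) t) :
    ∀ t ∈ Icc 0 T, √(a t) ≤ x t :=
  image_le_of_deriv_right_lt_deriv_boundary' (f' := fun t => a' t / (2 * √(a t)))
    (fun t _ => (hda t).continuousAt.sqrt.continuousWithinAt)
    (fun t ht => ((hda t).sqrt (ha_pos t ht).ne').hasDerivWithinAt) hx₀
    (fun t ht => (hx t ht).continuousAt.continuousWithinAt)
    (fun t ht => (hx t (Ico_subset_Icc_self ht)).hasDerivWithinAt)
    fun t ht heq => heq ▸ div_two_mul_sqrt_lt_clampedRiccati_sqrt hs (ha_pos t ht)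
      (ha_le t (Ico_subset_Icc_self ht)) (hda_neg t)

theorem sqrt_lt_of_hasDerivAt_clampedRiccati (hda : ∀ t, HasDerivAt a (a' t) t)
    (hda_neg : ∀ t, a' t < 0) (ha_pos : ∀ t ∈ Ico 0 T, 0 < a t)
    (ha_le : ∀ t ∈ Icc 0 T, √(a t) ≤ s) (hlow : ∀ t ∈ Icc 0 T, √(a t) ≤ x t)
    (hx : ∀ t ∈ Icc 0 T, HasDerivAt x (clampedRiccati a hs t (x t)) t) :
    ∀ t ∈ Ioo 0 T, √(a t) < x t := fun t ht =>
  lt_of_eventually_le_of_hasDerivAt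
    (eventually_of_mem (Ioo_mem_nhds ht.1 ht.2) fun u hu => hlow u (Ioo_subset_Icc_self hu))
    ((hda t).sqrt (ha_pos t (Ioo_subset_Ico_self ht)).ne') (hx t (Ioo_subset_Icc_self ht))
    fun heq => heq ▸ div_two_mul_sqrt_lt_clampedRiccati_sqrt hs (ha_pos t (Ioo_subset_Ico_self ht))
      (ha_le t (Ioo_subset_Icc_self ht)) (hda_neg t)

theorem antitoneOn_of_hasDerivAt_clampedRiccati (ha_nonneg : ∀ t ∈ Icc 0 T, 0 ≤ a t)
    (ha_le : ∀ t ∈ Icc 0 T, √(a t) ≤ s) (hlow : ∀ t ∈ Icc 0 T, √(a t) ≤ x t)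
    (hx : ∀ t ∈ Icc 0 T, HasDerivAt x (clampedRiccati a hs t (x t)) t) :
    AntitoneOn x (Icc 0 T) :=
  antitoneOn_of_hasDerivWithinAt_nonpos (convex_Icc 0 T)
    (fun t ht => (hx t ht).continuousAt.continuousWithinAt)
    (fun t ht => (hx t (interior_subset ht)).hasDerivWithinAt)
    fun t ht => clampedRiccati_nonpos hs (ha_nonneg t (interior_subset ht))
      (ha_le t (interior_subset ht)) (hlow t (interior_subset ht))

end barrier

/-- For `μ > 0`, `a₀ > 0` and `a t = a₀ - μ t`, the solution of
`x' = a t - x²` with `x 0 = √a₀` exists on all of `[0, a₀/μ]`, is nonincreasing there, and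
satisfies `√(a t) ≤ x t ≤ √a₀` on `[0, a₀/μ]`, with strict inequality `√(a t) < x t` on
`(0, a₀/μ)`; in particular `x (a₀/μ) ≥ 0`, so that the trajectory stays nonnegative at least
until `a` reaches the static bifurcation value `a = 0` (tipping is delayed to `a ≤ 0`). -/
theorem drifting_tipping_is_delayed
    (μ a₀ : ℝ) (hμ : 0 < μ) (ha₀ : 0 < a₀)
    (a : ℝ → ℝ) (ha : a = fun t => a₀ - μ * t) :
    ∃ x : ℝ → ℝ,
      x 0 = Real.sqrt a₀ ∧
      (∀ t ∈ Set.Icc (0 : ℝ) (a₀ / μ), HasDerivAt x (a t - (x t) ^ 2) t) ∧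
      AntitoneOn x (Set.Icc 0 (a₀ / μ)) ∧
      (∀ t ∈ Set.Icc (0 : ℝ) (a₀ / μ), Real.sqrt (a t) ≤ x t ∧ x t ≤ Real.sqrt a₀) ∧
      (∀ t ∈ Set.Ioo (0 : ℝ) (a₀ / μ), Real.sqrt (a t) < x t) ∧
      0 ≤ x (a₀ / μ) := by
  have hT : 0 < a₀ / μ := div_pos ha₀ hμ
  have hs : 0 ≤ √a₀ := Real.sqrt_nonneg a₀
  have hda : ∀ t, HasDerivAt a (-μ) t := fun t => by
    simpa [ha] using ((hasDerivAt_id t).const_mul μ).const_sub a₀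
  have ha_pos : ∀ t ∈ Ico 0 (a₀ / μ), 0 < a t := fun t ht => by
    have := (lt_div_iff₀ hμ).1 ht.2
    simp only [ha]; linarith
  have ha_nonneg : ∀ t ∈ Icc 0 (a₀ / μ), 0 ≤ a t := fun t ht => by
    have := (le_div_iff₀ hμ).1 ht.2
    simp only [ha]; linarith
  have ha_le : ∀ t ∈ Icc 0 (a₀ / μ), √(a t) ≤ √a₀ := fun t ht =>
    Real.sqrt_le_sqrt (by simp only [ha]; nlinarith [ht.1])
  obtain ⟨x, hx₀, hx⟩ := exists_hasDerivAt_clampedRiccati hs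
    (continuous_iff_continuousAt.2 fun t => (hda t).continuousAt) (√a₀) hT.le
  have hlow := sqrt_le_of_hasDerivAt_clampedRiccati hs hda (fun _ => neg_neg_of_pos hμ) ha_pos
    ha_le (by simp [ha, hx₀]) hx
  have hanti := antitoneOn_of_hasDerivAt_clampedRiccati hs ha_nonneg ha_le hlow hx
  have hup : ∀ t ∈ Icc 0 (a₀ / μ), x t ≤ √a₀ := fun t ht =>
    hx₀ ▸ hanti ⟨le_rfl, hT.le⟩ ht ht.1
  refine ⟨x, hx₀, fun t ht => ?_, hanti, fun t ht => ⟨hlow t ht, hup t ht⟩,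
    sqrt_lt_of_hasDerivAt_clampedRiccati hs hda (fun _ => neg_neg_of_pos hμ) ha_pos ha_le hlow hx,
    (Real.sqrt_nonneg _).trans (hlow _ ⟨hT.le, le_rfl⟩)⟩
  rw [← clampedRiccati_of_mem hs ⟨(Real.sqrt_nonneg _).trans (hlow t ht), hup t ht⟩]
  exact hx t ht
end

section
/- Let μ > 0, κ ≥ 0, a₀ ∈ ℝ, set a(t) = a₀ − μ t and β(t) = (a(t) − κ)/μ^{2/3}. Let u be a not-identically-zero C² solution of the Airy equation u''(s) = s·u(s), and suppose α* < β(0) satisfies u(α*) = 0 and u > 0 on (α*, β(0)]. Then y(t) := −μ^{1/3} u'(β(t))/u(β(t)) solves the averaged high-frequency equation y'(t) = a(t) − κ − y(t)² on [0, t*) with t* := (a₀ − κ − μ^{2/3}α*)/μ, and y(t) → −∞ as t → (t*)⁻, where a(t*) = μ^{2/3} α* + κ. (With κ = A²/(2Ω²), this yields the high-frequency tipping location a_hf = μ^{2/3} α* + A²/(2Ω²): the delayed tipping μ^{2/3}α* is shifted by the square of the ratio of forcing amplitude A to frequency Ω.) -/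
/-!
With `c = μ^(1/3)` the argument `β t = β 0 - c t` is affine, and the Riccati substitution
`y = -c u'(β)/u(β)` turns the Airy equation `u'' = s u` into `y' = c² β - y² = a - κ - y²`.
As `t ↑ t⋆`, `β t ↓ α⋆`, a zero of `u`. There `u' > 0`: it is `≥ 0` because `u > 0` to the
right, and `u'(α⋆) = 0` would force `u ≡ 0` on `[α⋆, β 0]` by uniqueness for the linear ODE.
Hence `u'/u → +∞` along `β`, i.e. `y → -∞`.
-/

open Real Filter Topology Set

lemma lipschitzWith_companion (r : ℝ) :
    LipschitzWith (max 1 ‖r‖₊) fun x : ℝ × ℝ => (x.2, r * x.1) := by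
  have h : LipschitzWith (max 1 (‖r‖₊ * 1)) fun x : ℝ × ℝ => (x.2, r • x.1) :=
    LipschitzWith.prod_snd.prodMk ((lipschitzWith_smul r).comp LipschitzWith.prod_fst)
  rwa [mul_one] at h

section LinearSecondOrder

variable {u q : ℝ → ℝ} {α b : ℝ}

lemma hasDerivAt_deriv_of_deriv_deriv_eq_mul (hu : ContDiff ℝ 2 u)
    (hode : ∀ s, deriv (deriv u) s = q s * u s) (s : ℝ) : HasDerivAt (deriv u) (q s * u s) s :=
  hode s ▸ (hu.deriv'.differentiable one_ne_zero).differentiableAt.hasDerivAt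

lemma hasDerivAt_prod_deriv (hu : ContDiff ℝ 2 u) (hode : ∀ s, deriv (deriv u) s = q s * u s)
    (s : ℝ) : HasDerivAt (fun s => (u s, deriv u s)) (deriv u s, q s * u s) s :=
  (hu.differentiable two_ne_zero).differentiableAt.hasDerivAt.prodMk
    (hasDerivAt_deriv_of_deriv_deriv_eq_mul hu hode s)

theorem eqOn_zero_of_deriv_deriv_eq_mul_s7 (hu : ContDiff ℝ 2 u) (hq : Continuous q)
    (hode : ∀ s, deriv (deriv u) s = q s * u s) (h₀ : u α = 0) (h₁ : deriv u α = 0) :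
    EqOn u 0 (Icc α b) := by
  obtain ⟨C, hC⟩ := isCompact_Icc.exists_bound_of_continuousOn (hq.continuousOn (s := Icc α b))
  have hv : ∀ t ∈ Ico α b, LipschitzOnWith (max 1 C.toNNReal)
      (fun x : ℝ × ℝ => (x.2, q t * x.1)) univ := by
    intro t ht
    have hqt : ‖q t‖₊ ≤ C.toNNReal := by
      rw [← NNReal.coe_le_coe, coe_nnnorm, Real.coe_toNNReal']
      exact (hC t (Ico_subset_Icc_self ht)).trans (le_max_left _ _)
    exact ((lipschitzWith_companion (q t)).weaken (max_le_max le_rfl hqt)).lipschitzOnWith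
  have huu' := hasDerivAt_prod_deriv hu hode
  have hzero (t : ℝ) : HasDerivWithinAt (fun _ => (0 : ℝ × ℝ)) (0, q t * 0) (Ici t) t := by
    simpa only [mul_zero, Prod.mk_zero_zero] using
      (hasDerivAt_const t (0 : ℝ × ℝ)).hasDerivWithinAt
  have hsol := ODE_solution_unique_of_mem_Icc_right hv
    (continuous_iff_continuousAt.2 fun s => (huu' s).continuousAt).continuousOn
    (fun t _ => (huu' t).hasDerivWithinAt) (fun _ _ => mem_univ _)
    continuousOn_const (fun t _ => hzero t) (fun _ _ => mem_univ _) (by simp [h₀, h₁])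
  exact fun s hs => congrArg Prod.fst (hsol hs)

theorem deriv_pos_of_eq_zero_of_pos_right (hu : ContDiff ℝ 2 u) (hq : Continuous q)
    (hode : ∀ s, deriv (deriv u) s = q s * u s) (hlt : α < b) (h₀ : u α = 0)
    (hpos : ∀ s ∈ Ioc α b, 0 < u s) : 0 < deriv u α := by
  have hmin : IsMinOn u (Icc α b) α := isMinOn_iff.2 fun s hs => by
    rcases hs.1.eq_or_lt with rfl | h
    · exact le_rfl
    · exact h₀ ▸ (hpos s ⟨h, hs.2⟩).le
  have hnonneg : 0 ≤ (b - α) * deriv u α := by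
    simpa using hmin.localize.hasFDerivWithinAt_nonneg
      ((hu.differentiable two_ne_zero).differentiableAt.hasDerivAt.hasDerivWithinAt
        (s := Icc α b)).hasFDerivWithinAt
      (sub_mem_posTangentConeAt_of_segment_subset (segment_eq_Icc hlt.le).subset)
  refine (nonneg_of_mul_nonneg_right hnonneg (sub_pos.2 hlt)).lt_of_ne fun h₁ => ?_
  exact (hpos b ⟨hlt, le_rfl⟩).ne' (eqOn_zero_of_deriv_deriv_eq_mul_s7 hu hq hode h₀ h₁.symm
    ⟨hlt.le, le_rfl⟩)

end LinearSecondOrder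

theorem hasDerivAt_riccati_of_deriv_deriv_eq_mul {u q : ℝ → ℝ} {b c t : ℝ}
    (hu : ContDiff ℝ 2 u) (hode : ∀ s, deriv (deriv u) s = q s * u s)
    (hne : u (b - c * t) ≠ 0) :
    HasDerivAt (fun t => -c * deriv u (b - c * t) / u (b - c * t))
      (c ^ 2 * q (b - c * t) - (-c * deriv u (b - c * t) / u (b - c * t)) ^ 2) t := by
  have hβ : HasDerivAt (fun t => b - c * t) (-c) t := by
    simpa using ((hasDerivAt_id t).const_mul c).const_sub b
  have hu₁ : HasDerivAt u (deriv u (b - c * t)) (b - c * t) :=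
    (hu.differentiable two_ne_zero).differentiableAt.hasDerivAt
  have hu₂ := hasDerivAt_deriv_of_deriv_deriv_eq_mul hu hode (b - c * t)
  refine (((hu₂.comp t hβ).const_mul (-c)).div (hu₁.comp t hβ) hne).congr_deriv ?_
  simp only [Function.comp_apply]
  field_simp

theorem tendsto_div_atTop_of_eq_zero {f g : ℝ → ℝ} {α : ℝ}
    (hf : ContinuousAt f α) (hf₀ : f α = 0)
    (hpos : ∀ᶠ s in 𝓝[>] α, 0 < f s) (hg : ContinuousAt g α) (hg₀ : 0 < g α) :
    Tendsto (fun s => g s / f s) (𝓝[>] α) atTop := by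
  have hf' : Tendsto f (𝓝[>] α) (𝓝[>] 0) :=
    tendsto_nhdsWithin_iff.2 ⟨hf₀ ▸ hf.tendsto.mono_left nhdsWithin_le_nhds, hpos⟩
  simpa only [div_eq_mul_inv, Function.comp_def] using
    (hg.tendsto.mono_left nhdsWithin_le_nhds).pos_mul_atTop hg₀ (tendsto_inv_nhdsGT_zero.comp hf')

theorem tendsto_sub_mul_nhdsLT {b c t₀ : ℝ} (hc : 0 < c) :
    Tendsto (fun t => b - c * t) (𝓝[<] t₀) (𝓝[>] (b - c * t₀)) :=
  have hcont : Continuous fun t => b - c * t := by fun_prop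
  tendsto_nhdsWithin_iff.2 ⟨(hcont.tendsto t₀).mono_left nhdsWithin_le_nhds,
    eventually_nhdsWithin_of_forall fun t (ht : t < t₀) => by simp only [mem_Ioi]; nlinarith⟩

theorem high_frequency_averaged_tipping_general
    (μ κ a₀ : ℝ) (hμ : 0 < μ)
    (u : ℝ → ℝ) (hu : ContDiff ℝ 2 u)
    (hairy : ∀ s, deriv (deriv u) s = s * u s)
    (a β : ℝ → ℝ)
    (ha : a = fun t => a₀ - μ * t)
    (hβ : β = fun t => (a t - κ) / μ ^ ((2 : ℝ) / 3))
    (αs : ℝ) (hlt : αs < β 0) (hzero : u αs = 0)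
    (hpos : ∀ s ∈ Set.Ioc αs (β 0), 0 < u s)
    (ts : ℝ) (hts : ts = (a₀ - κ - μ ^ ((2 : ℝ) / 3) * αs) / μ)
    (y : ℝ → ℝ)
    (hy : y = fun t => -μ ^ ((1 : ℝ) / 3) * deriv u (β t) / u (β t)) :
    (∀ t ∈ Set.Ico (0 : ℝ) ts, HasDerivAt y (a t - κ - (y t) ^ 2) t) ∧
    Tendsto y (𝓝[<] ts) atBot ∧
    a ts = μ ^ ((2 : ℝ) / 3) * αs + κ := by
  obtain ⟨c, hc, hc₁, hc₂, rfl⟩ :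
      ∃ c > 0, μ ^ ((1 : ℝ) / 3) = c ∧ μ ^ ((2 : ℝ) / 3) = c ^ 2 ∧ μ = c ^ 3 := by
    refine ⟨_, rpow_pos_of_pos hμ _, rfl, ?_, ?_⟩ <;>
      rw [← rpow_natCast, ← rpow_mul hμ.le] <;> norm_num
  rw [hc₂] at hβ hts ⊢
  have hβc : β = fun t => β 0 - c * t := by
    funext t; simp only [hβ, ha]; field_simp; ring
  have hαs : αs = β 0 - c * ts := by
    simp only [hts, hβ, ha]; field_simp; ring
  have hmem : ∀ t ∈ Ico 0 ts, β 0 - c * t ∈ Ioc αs (β 0) := fun t ht =>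
    ⟨by nlinarith [ht.2], by nlinarith [ht.1]⟩
  rw [hc₁, hβc] at hy
  subst hy
  refine ⟨fun t ht => ?_, ?_, by simp only [ha, hts]; field_simp; ring⟩
  · convert hasDerivAt_riccati_of_deriv_deriv_eq_mul hu hairy (hpos _ (hmem t ht)).ne' using 2
    simp only [hβ, ha]; field_simp; ring
  · have hd := deriv_pos_of_eq_zero_of_pos_right hu continuous_id hairy hlt hzero hpos
    have hblow := tendsto_div_atTop_of_eq_zero (hu.continuous.continuousAt) hzero
      (eventually_of_mem (Ioc_mem_nhdsGT hlt) hpos) (hu.continuous_deriv one_le_two).continuousAt hd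
    simpa only [mul_div_assoc, Function.comp_def] using
      (hblow.comp (hαs ▸ tendsto_sub_mul_nhdsLT hc)).const_mul_atTop_of_neg (neg_neg_of_pos hc)

/-- With `a t = a₀ - μ t`, `β t = (a t - κ)/μ^(2/3)` and `u` a nontrivial `C²`
Airy solution with `u αs = 0`, `u > 0` on `(αs, β 0]`, the function
`y t = -μ^(1/3) u'(β t)/u(β t)` solves the averaged high-frequency equation
`y' = a t - κ - y²` on `[0, t⋆)` with `t⋆ = (a₀ - κ - μ^(2/3) αs)/μ`, blows up to `-∞` as
`t → t⋆⁻`, and `a t⋆ = μ^(2/3) αs + κ` (the high-frequency tipping location,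
with `κ = A²/(2Ω²)`). -/
theorem high_frequency_averaged_tipping
    (μ κ a₀ : ℝ) (hμ : 0 < μ) (hκ : 0 ≤ κ)
    (u : ℝ → ℝ) (hu : ContDiff ℝ 2 u) (hune : ∃ s, u s ≠ 0)
    (hairy : ∀ s, deriv (deriv u) s = s * u s)
    (a β : ℝ → ℝ)
    (ha : a = fun t => a₀ - μ * t)
    (hβ : β = fun t => (a t - κ) / μ ^ ((2 : ℝ) / 3))
    (αs : ℝ) (hlt : αs < β 0) (hzero : u αs = 0)
    (hpos : ∀ s ∈ Set.Ioc αs (β 0), 0 < u s)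
    (ts : ℝ) (hts : ts = (a₀ - κ - μ ^ ((2 : ℝ) / 3) * αs) / μ)
    (y : ℝ → ℝ)
    (hy : y = fun t => -μ ^ ((1 : ℝ) / 3) * deriv u (β t) / u (β t)) :
    (∀ t ∈ Set.Ico (0 : ℝ) ts, HasDerivAt y (a t - κ - (y t) ^ 2) t) ∧
    Tendsto y (𝓝[<] ts) atBot ∧
    a ts = μ ^ ((2 : ℝ) / 3) * αs + κ :=
  high_frequency_averaged_tipping_general μ κ a₀ hμ u hu hairy a β ha hβ αs hlt hzero hpos ts hts y
    hy
end

section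
/- Let a_m, A_m, A₁, c, 𝒦 be positive reals and let 1/3 < q < 1/2. For μ ∈ (0,1) define C₁(μ) = μ^{−q}·(A_m/(𝒦 a_m A₁))·(√(c² a_m / 2) − A₁ a_m / A_m) + μ^{1−3q}·(A_m/(2𝒦³ a_m A₁))·(1 − A₁ a_m/(A_m c √(2 a_m))) and C₂(μ) = μ^{q−1}·(A_m/(3 a_m A₁))·((1/2)c² a_m − A₁² a_m²/A_m²). If A₁ a_m / A_m < c² A_m / (2 A₁), then C₁(μ) + C₂(μ) > 0 for every μ ∈ (0,1). If A₁ a_m / A_m > c² A_m / (2 A₁), then there exists μ₀ ∈ (0,1) such that C₁(μ) + C₂(μ) < 0 for all μ ∈ (0, μ₀). -/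
open Real

/-- With positive parameters `a_m, A_m, A₁, c, 𝒦` and `1/3 < q < 1/2`,
define the matching coefficients
`C₁ μ = μ^(-q)·(A_m/(𝒦 a_m A₁))·(√(c² a_m/2) - A₁ a_m/A_m)
      + μ^(1-3q)·(A_m/(2𝒦³ a_m A₁))·(1 - A₁ a_m/(A_m c √(2 a_m)))` and
`C₂ μ = μ^(q-1)·(A_m/(3 a_m A₁))·((1/2)c² a_m - A₁² a_m²/A_m²)`.
If `A₁ a_m/A_m < c² A_m/(2A₁)` then `C₁ μ + C₂ μ > 0` for every `μ ∈ (0,1)`; if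
`A₁ a_m/A_m > c² A_m/(2A₁)` then `C₁ μ + C₂ μ < 0` for all sufficiently small `μ`. -/
theorem matching_constant_sign
    (a_m A_m A₁ c 𝒦 q : ℝ)
    (ham : 0 < a_m) (hAm : 0 < A_m) (hA₁ : 0 < A₁) (hc : 0 < c) (h𝒦 : 0 < 𝒦)
    (hq1 : 1 / 3 < q) (hq2 : q < 1 / 2)
    (C₁ C₂ : ℝ → ℝ)
    (hC₁ : C₁ = fun μ =>
      μ ^ (-q) * (A_m / (𝒦 * a_m * A₁)) *
          (Real.sqrt (c ^ 2 * a_m / 2) - A₁ * a_m / A_m) +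
        μ ^ (1 - 3 * q) * (A_m / (2 * 𝒦 ^ 3 * a_m * A₁)) *
          (1 - A₁ * a_m / (A_m * c * Real.sqrt (2 * a_m))))
    (hC₂ : C₂ = fun μ =>
      μ ^ (q - 1) * (A_m / (3 * a_m * A₁)) *
        ((1 / 2) * c ^ 2 * a_m - A₁ ^ 2 * a_m ^ 2 / A_m ^ 2)) :
    (A₁ * a_m / A_m < c ^ 2 * A_m / (2 * A₁) →
      ∀ μ ∈ Set.Ioo (0 : ℝ) 1, 0 < C₁ μ + C₂ μ) ∧
    (c ^ 2 * A_m / (2 * A₁) < A₁ * a_m / A_m →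
      ∃ μ₀ ∈ Set.Ioo (0 : ℝ) 1, ∀ μ ∈ Set.Ioo (0 : ℝ) μ₀, C₁ μ + C₂ μ < 0) := by
  subst hC₁ hC₂
  have hspos : 0 < Real.sqrt (2 * a_m) := Real.sqrt_pos.mpr (by positivity)
  have hs2 : Real.sqrt (2 * a_m) ^ 2 = 2 * a_m := Real.sq_sqrt (by positivity)
  set s := Real.sqrt (2 * a_m) with hs
  constructor
  · -- positive case
    rintro hcond μ ⟨hμ0, hμ1⟩
    rw [div_lt_div_iff₀ (by positivity) (by positivity)] at hcond
    have hsq : (A₁ * a_m / A_m) ^ 2 < c ^ 2 * a_m / 2 := by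
      rw [div_pow, div_lt_div_iff₀ (by positivity) (by norm_num)]
      nlinarith [mul_lt_mul_of_pos_right hcond ham, sq_nonneg A_m]
    have hfac1 : A₁ * a_m / A_m < Real.sqrt (c ^ 2 * a_m / 2) :=
      (Real.lt_sqrt (by positivity)).mpr hsq
    have hfac2 : A₁ * a_m < A_m * c * s := by
      by_contra h
      push_neg at h
      have h2 : (A_m * c * s) ^ 2 ≤ (A₁ * a_m) ^ 2 := by
        have := mul_le_mul h h (by positivity) (by positivity)
        nlinarith
      have h3 : (A₁ * a_m) ^ 2 < c ^ 2 * a_m / 2 * A_m ^ 2 := by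
        have h4 := mul_lt_mul_of_pos_right hsq (show (0:ℝ) < A_m ^ 2 by positivity)
        rw [div_pow, div_mul_cancel₀ _ (by positivity : A_m ^ 2 ≠ 0)] at h4
        exact h4
      nlinarith [hs2, mul_pos (mul_pos (pow_pos hAm 2) (pow_pos hc 2)) ham]
    have h1 : 0 < μ ^ (-q) * (A_m / (𝒦 * a_m * A₁)) *
        (Real.sqrt (c ^ 2 * a_m / 2) - A₁ * a_m / A_m) :=
      mul_pos (mul_pos (Real.rpow_pos_of_pos hμ0 _) (by positivity)) (sub_pos.mpr hfac1)
    have h2 : 0 < μ ^ (1 - 3 * q) * (A_m / (2 * 𝒦 ^ 3 * a_m * A₁)) *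
        (1 - A₁ * a_m / (A_m * c * s)) := by
      refine mul_pos (mul_pos (Real.rpow_pos_of_pos hμ0 _) (by positivity)) ?_
      rw [sub_pos]
      exact (div_lt_one (by positivity)).mpr hfac2
    have h3 : 0 < μ ^ (q - 1) * (A_m / (3 * a_m * A₁)) *
        (1 / 2 * c ^ 2 * a_m - A₁ ^ 2 * a_m ^ 2 / A_m ^ 2) := by
      refine mul_pos (mul_pos (Real.rpow_pos_of_pos hμ0 _) (by positivity)) ?_
      have : A₁ ^ 2 * a_m ^ 2 / A_m ^ 2 = (A₁ * a_m / A_m) ^ 2 := by ring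
      rw [this]
      linarith [hsq]
    simp only []
    linarith
  · -- negative case
    intro hcond
    rw [div_lt_div_iff₀ (by positivity) (by positivity)] at hcond
    have hsq : c ^ 2 * a_m / 2 < (A₁ * a_m / A_m) ^ 2 := by
      rw [div_pow, div_lt_div_iff₀ (by norm_num) (by positivity)]
      nlinarith [mul_lt_mul_of_pos_right hcond ham, sq_nonneg A_m]
    set β : ℝ := A_m / (3 * a_m * A₁) * (A₁ ^ 2 * a_m ^ 2 / A_m ^ 2 - 1 / 2 * c ^ 2 * a_m)
      with hβdef
    have hβ : 0 < β := by
      refine mul_pos (by positivity) ?_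
      have : A₁ ^ 2 * a_m ^ 2 / A_m ^ 2 = (A₁ * a_m / A_m) ^ 2 := by ring
      rw [this]
      linarith
    set M : ℝ := A_m / (2 * 𝒦 ^ 3 * a_m * A₁) with hMdef
    have hM : 0 < M := by positivity
    set r : ℝ := 2 - 4 * q with hrdef
    have hr : 0 < r := by simp only [hrdef]; linarith
    refine ⟨min (1/2) ((β / (M + 1)) ^ (1/r)), ⟨?_, ?_⟩, ?_⟩
    · exact lt_min (by norm_num) (Real.rpow_pos_of_pos (by positivity) _)
    · exact lt_of_le_of_lt (min_le_left _ _) (by norm_num)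
    rintro μ ⟨hμ0, hμ1⟩
    have hμlt : μ < (β / (M + 1)) ^ (1/r) := lt_of_lt_of_le hμ1 (min_le_right _ _)
    have hkey : μ ^ r * M < β := by
      have h1 : μ ^ r < ((β / (M + 1)) ^ (1/r)) ^ r :=
        Real.rpow_lt_rpow hμ0.le hμlt hr
      have h2 : ((β / (M + 1)) ^ (1/r)) ^ r = β / (M + 1) := by
        rw [← Real.rpow_mul (by positivity), one_div_mul_cancel hr.ne', Real.rpow_one]
      rw [h2] at h1
      calc μ ^ r * M < β / (M + 1) * M := by
            exact mul_lt_mul_of_pos_right h1 hM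
        _ < β / (M + 1) * (M + 1) := by
            exact mul_lt_mul_of_pos_left (lt_add_one M) (by positivity)
        _ = β := div_mul_cancel₀ β (by positivity)
    have hμrpos : (0:ℝ) < μ ^ r := Real.rpow_pos_of_pos hμ0 _
    have hmain : μ ^ (1 - 3 * q) * M < μ ^ (q - 1) * β := by
      have heq : μ ^ (q - 1) = μ ^ (1 - 3 * q) / μ ^ r := by
        rw [← Real.rpow_sub hμ0]
        congr 1
        simp only [hrdef]; ring
      rw [heq, div_mul_eq_mul_div, lt_div_iff₀ hμrpos]
      calc μ ^ (1 - 3 * q) * M * μ ^ r = μ ^ (1 - 3 * q) * (μ ^ r * M) := by ring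
        _ < μ ^ (1 - 3 * q) * β :=
            mul_lt_mul_of_pos_left hkey (Real.rpow_pos_of_pos hμ0 _)
    -- term bounds
    have hfac1 : Real.sqrt (c ^ 2 * a_m / 2) ≤ A₁ * a_m / A_m := by
      have := Real.sqrt_le_sqrt hsq.le
      rwa [Real.sqrt_sq (by positivity)] at this
    have ht1 : μ ^ (-q) * (A_m / (𝒦 * a_m * A₁)) *
        (Real.sqrt (c ^ 2 * a_m / 2) - A₁ * a_m / A_m) ≤ 0 :=
      mul_nonpos_of_nonneg_of_nonpos
        (le_of_lt (mul_pos (Real.rpow_pos_of_pos hμ0 _) (by positivity)))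
        (sub_nonpos.mpr hfac1)
    have ht2 : μ ^ (1 - 3 * q) * (A_m / (2 * 𝒦 ^ 3 * a_m * A₁)) *
        (1 - A₁ * a_m / (A_m * c * s)) ≤ μ ^ (1 - 3 * q) * M := by
      have h1le : 1 - A₁ * a_m / (A_m * c * s) ≤ 1 := by
        have : 0 ≤ A₁ * a_m / (A_m * c * s) := by positivity
        linarith
      calc μ ^ (1 - 3 * q) * (A_m / (2 * 𝒦 ^ 3 * a_m * A₁)) *
            (1 - A₁ * a_m / (A_m * c * s))
          ≤ μ ^ (1 - 3 * q) * (A_m / (2 * 𝒦 ^ 3 * a_m * A₁)) * 1 :=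
            mul_le_mul_of_nonneg_left h1le
              (le_of_lt (mul_pos (Real.rpow_pos_of_pos hμ0 _) (by positivity)))
        _ = μ ^ (1 - 3 * q) * M := by rw [mul_one, hMdef]
    have ht3 : μ ^ (q - 1) * (A_m / (3 * a_m * A₁)) *
        (1 / 2 * c ^ 2 * a_m - A₁ ^ 2 * a_m ^ 2 / A_m ^ 2) = -(μ ^ (q - 1) * β) := by
      rw [hβdef]; ring
    simp only []
    rw [ht3]
    linarith
end
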